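/- For a partition μ of length l, the following multiset identity holds: the multiset of hook lengths {h(x) : x ∈ μ} together with the multiset {μᵢ - μⱼ + j - i : 1 ≤ i < j ≤ l} equals the multiset {j - i + l : 1 ≤ i ≤ l, 1 ≤ j ≤ μᵢ} together with {j - i : 1 ≤ i < j ≤ l}. Equivalently, as generating polynomials in t: Σ_{x∈μ} t^{h(x)} + Σ_{i<j} t^{μᵢ-μⱼ+j-i} = Σ_{i=1}^{l} Σ_{j=1}^{μᵢ - i + l} t^j. -/

import Mathlib

/-!
Fix a row `i`. Its hook lengths `μ i + colLen j - i - j - 1` strictly decrease in the column `j`,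
the numbers `μ i - μ k + k - i` (`i < k < l`) strictly increase in `k`, and no value occurs in both
families: whether column `j` reaches row `k` (that is, `j < μ k`) decides on which side of
`μ i - μ k + k - i` the hook length falls. Both families lie in `{1, …, μ i + l - i - 1}`, which has
exactly as many elements as they have together, so they partition it. Summing over the rows gives
the identity.
-/

open Finset Polynomial

def colLen (l : ℕ) (μ : ℕ → ℕ) (j : ℕ) : ℕ :=
  #{r ∈ range l | j + 1 ≤ μ r}

section colLen

variable {l : ℕ} {μ : ℕ → ℕ}

theorem colLen_le (j : ℕ) : colLen l μ j ≤ l :=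
  (card_filter_le _ _).trans_eq (card_range l)

theorem colLen_antitone : Antitone (colLen l μ) := fun _ _ hj =>
  card_le_card <| monotone_filter_right _ fun _ _ hr => le_trans (by omega) hr

theorem lt_colLen_iff (hμ : Antitone μ) {j k : ℕ} (hk : k < l) : k < colLen l μ j ↔ j < μ k := by
  constructor
  · intro hlt
    by_contra! hle
    have hsub : ({r ∈ range l | j + 1 ≤ μ r} : Finset ℕ) ⊆ range k := fun r hr => by
      simp only [mem_filter, mem_range] at hr ⊢
      by_contra! hkr
      have := hμ hkr
      omega
    exact absurd (card_le_card hsub) (by rw [card_range]; exact hlt.not_ge)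
  · intro hjk
    have hsub : range (k + 1) ⊆ {r ∈ range l | j + 1 ≤ μ r} := fun r hr => by
      simp only [mem_filter, mem_range] at hr ⊢
      exact ⟨by omega, hjk.trans_le (hμ (by omega))⟩
    exact (card_range (k + 1)).symm.trans_le (card_le_card hsub)

end colLen

/-- Arm `μ i - j - 1` plus leg `colLen l μ j - i - 1` plus one, rows and columns counted from `0`. -/
def hookLen (l : ℕ) (μ : ℕ → ℕ) (i j : ℕ) : ℕ :=
  μ i + colLen l μ j - (i + j + 1)

def rowGap (μ : ℕ → ℕ) (i k : ℕ) : ℕ :=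
  μ i - μ k + (k - i)

theorem sum_comp_add_sum_comp_eq_of_injOn {α β γ M : Type*} [AddCommMonoid M] [DecidableEq γ]
    {s : Finset α} {t : Finset β} {u : Finset γ} {f : α → γ} {g : β → γ} (φ : γ → M)
    (hf : Set.InjOn f s) (hg : Set.InjOn g t) (hdisj : Disjoint (s.image f) (t.image g))
    (hsub : s.image f ∪ t.image g ⊆ u) (hcard : #u ≤ #s + #t) :
    ∑ x ∈ s, φ (f x) + ∑ y ∈ t, φ (g y) = ∑ z ∈ u, φ z := by
  have hunion : s.image f ∪ t.image g = u := by
    refine eq_of_subset_of_card_le hsub ?_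
    rwa [card_union_of_disjoint hdisj, card_image_of_injOn hf, card_image_of_injOn hg]
  rw [← sum_image hf, ← sum_image hg, ← sum_union hdisj, hunion]

section row

variable {l : ℕ} {μ : ℕ → ℕ} {i : ℕ}

theorem hookLen_strictAntiOn (hμ : Antitone μ) (hi : i < l) :
    StrictAntiOn (hookLen l μ i) (range (μ i)) := by
  intro j₁ _ j₂ hj₂ hlt
  have hj₂ := mem_range.1 hj₂
  have hcol := colLen_antitone (l := l) (μ := μ) hlt.le
  have hrow := (lt_colLen_iff hμ hi).2 hj₂
  simp only [hookLen]
  omega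

theorem rowGap_strictMonoOn (hμ : Antitone μ) : StrictMonoOn (rowGap μ i) (Ioo i l) := by
  intro k₁ hk₁ k₂ _ hlt
  have hik := (mem_Ioo.1 hk₁).1
  have h₁ := hμ hlt.le
  have h₂ := hμ hik.le
  simp only [rowGap]
  omega

theorem hookLen_ne_rowGap (hμ : Antitone μ) (hi : i < l) {j k : ℕ} (hj : j < μ i)
    (hk : k ∈ Ioo i l) : hookLen l μ i j ≠ rowGap μ i k := by
  unfold hookLen rowGap
  obtain ⟨hik, hkl⟩ := mem_Ioo.1 hk
  have hrow := (lt_colLen_iff hμ hi).2 hj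
  have hcol := lt_colLen_iff (j := j) hμ hkl
  have hμk := hμ hik.le
  rcases lt_or_ge j (μ k) with hjk | hjk
  · have := hcol.2 hjk
    omega
  · have := mt hcol.1 hjk.not_gt
    omega

theorem sum_X_pow_hookLen_add_sum_X_pow_rowGap (hμ : Antitone μ) (hi : i < l) :
    ∑ j ∈ range (μ i), (X : ℤ[X]) ^ hookLen l μ i j + ∑ k ∈ Ioo i l, (X : ℤ[X]) ^ rowGap μ i k
      = ∑ j ∈ range (μ i + (l - (i + 1))), (X : ℤ[X]) ^ (j + 1) := by
  conv_rhs => rw [range_eq_Ico, sum_Ico_add' (X ^ ·), zero_add, Ico_add_one_right_eq_Icc]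
  refine sum_comp_add_sum_comp_eq_of_injOn (X ^ ·) (hookLen_strictAntiOn hμ hi).injOn
    (rowGap_strictMonoOn hμ).injOn ?_ ?_ ?_
  · simp only [disjoint_left, mem_image, mem_range, not_exists, not_and]
    rintro _ ⟨j, hj, rfl⟩ k hk
    exact (hookLen_ne_rowGap hμ hi hj hk).symm
  · intro x hx
    simp only [mem_union, mem_image, mem_range, mem_Ioo, mem_Icc] at hx ⊢
    rcases hx with ⟨j, hj, rfl⟩ | ⟨k, ⟨hik, hkl⟩, rfl⟩
    · have := (lt_colLen_iff hμ hi).2 hj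
      have := colLen_le (l := l) (μ := μ) j
      unfold hookLen
      omega
    · have := hμ hik.le
      unfold rowGap
      omega
  · simp only [Nat.card_Icc, card_range, Nat.card_Ioo]
    omega

end row

theorem hook_multiset_identity_general (l : ℕ) (μ : ℕ → ℕ)
    (hmono : ∀ i j, i ≤ j → μ j ≤ μ i) :
    (∑ i ∈ range l, ∑ j ∈ range (μ i),
        (X : Polynomial ℤ) ^ (μ i + (((range l).filter fun r => j + 1 ≤ μ r).card) - (i + j + 1)))
      + ∑ i ∈ range l, ∑ j ∈ Ioo i l, (X : Polynomial ℤ) ^ (μ i - μ j + (j - i))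
      = ∑ i ∈ range l, ∑ j ∈ range (μ i + (l - (i + 1))), (X : Polynomial ℤ) ^ (j + 1) := by
  rw [← sum_add_distrib]
  exact sum_congr rfl fun i hi => sum_X_pow_hookLen_add_sum_X_pow_rowGap hmono (mem_range.1 hi)

/-- For a partition `μ` of length `l`, the generating polynomial identity
`Σ_{x∈μ} t^{h(x)} + Σ_{i<j} t^{μᵢ-μⱼ+j-i} = Σ_{i=1}^{l} Σ_{j=1}^{μᵢ-i+l} t^j`,
expressing the multiset identity between hook lengths together with the numbers
`μᵢ - μⱼ + j - i` (for `i < j`) on one side, and the numbers `j - i + l`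
(for `1 ≤ i ≤ l`, `1 ≤ j ≤ μᵢ`) together with `j - i` (for `i < j`) on the other. -/
theorem hook_multiset_identity (l : ℕ) (μ : ℕ → ℕ)
    (hmono : ∀ i j, i ≤ j → μ j ≤ μ i)
    (hsupp : ∀ i, l ≤ i → μ i = 0) :
    (∑ i ∈ range l, ∑ j ∈ range (μ i),
        (X : Polynomial ℤ) ^ (μ i + (((range l).filter fun r => j + 1 ≤ μ r).card) - (i + j + 1)))
      + ∑ i ∈ range l, ∑ j ∈ Ioo i l, (X : Polynomial ℤ) ^ (μ i - μ j + (j - i))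
      = ∑ i ∈ range l, ∑ j ∈ range (μ i + (l - (i + 1))), (X : Polynomial ℤ) ^ (j + 1) :=
  hook_multiset_identity_general l μ hmono
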